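/- Let R = K[x_1,...,x_n], fix a variable y, and suppose {g_1,...,g_t} generates an ideal I where each g_i can be written g_i = q_i y^{d_i} + r_i with d_i ∈ {0,1}, y not dividing any term of q_i, and y not dividing any term of r_i when d_i = 1 (i.e., in_y(g_i) = q_i y^{d_i}). If {g_1,...,g_t} is a Gröbner basis of I for a y-compatible monomial order, then in_y(I) = C ∩ (N + ⟨y⟩), where C = ⟨q_1,...,q_t⟩ and N = ⟨q_i : d_i = 0⟩. -/

import Mathlib

open Finset MvPolynomial

variable {K : Type} [Field K] {n : ℕ}

/-- The initial `y`-form of a polynomial `f`: writing `f = ∑ αᵢ yⁱ` with the `αᵢ` free of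
`y` and `α_d ≠ 0`, `inY y f = α_d * y^d`.  Concretely, it is the sum of all terms of `f`
whose exponent of `y` equals `degreeOf y f`. -/
noncomputable def inY (y : Fin n) (f : MvPolynomial (Fin n) K) : MvPolynomial (Fin n) K :=
  ∑ c ∈ f.support.filter (fun c => c y = f.degreeOf y), monomial c (f.coeff c)

/-- The leading exponent (leading monomial) of `f` with respect to a monomial order. -/
noncomputable def leadExp (m : MonomialOrder (Fin n)) (f : MvPolynomial (Fin n) K) :
    Fin n →₀ ℕ :=
  m.toSyn.symm (f.support.sup fun c => m.toSyn c)

/-- A monomial order is `y`-compatible if the leading term of every nonzero polynomial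
coincides with the leading term of its initial `y`-form. -/
def IsYCompatible (m : MonomialOrder (Fin n)) (y : Fin n) : Prop :=
  ∀ f : MvPolynomial (Fin n) K, f ≠ 0 →
    leadExp m f = leadExp m (inY y f) ∧
      f.coeff (leadExp m f) = (inY y f).coeff (leadExp m (inY y f))

/-- `G` is a Gröbner basis of `I` with respect to the monomial order `m`: its elements lie
in `I` and the leading monomial of every nonzero element of `I` is divisible by the leading
monomial of some nonzero element of `G`. -/
def IsGroebnerBasis (m : MonomialOrder (Fin n)) (I : Ideal (MvPolynomial (Fin n) K))
    (G : Set (MvPolynomial (Fin n) K)) : Prop :=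
  G ⊆ (I : Set (MvPolynomial (Fin n) K)) ∧
    ∀ f ∈ I, f ≠ 0 → ∃ g ∈ G, g ≠ 0 ∧ leadExp m g ≤ leadExp m f

noncomputable def sliceY (y : Fin n) (k : ℕ) (f : MvPolynomial (Fin n) K) :
    MvPolynomial (Fin n) K :=
  ∑ c ∈ f.support.filter (fun c => c y = k), monomial c (f.coeff c)

lemma inY_eq_sliceY (y : Fin n) (f : MvPolynomial (Fin n) K) :
    inY y f = sliceY y (degreeOf y f) f := rfl

lemma coeff_sliceY (y : Fin n) (k : ℕ) (f : MvPolynomial (Fin n) K) (e : Fin n →₀ ℕ) :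
    (sliceY y k f).coeff e = if e y = k then f.coeff e else 0 := by
  classical
  rw [sliceY, coeff_sum]
  simp only [coeff_monomial]
  rw [Finset.sum_ite_eq' (f.support.filter (fun c => c y = k)) e (fun c => f.coeff c)]
  by_cases h1 : e y = k <;> by_cases h2 : e ∈ f.support <;>
    simp_all [Finset.mem_filter, MvPolynomial.notMem_support_iff]

lemma sliceY_zero (y : Fin n) (k : ℕ) : sliceY y k (0 : MvPolynomial (Fin n) K) = 0 := by
  simp [sliceY]

lemma sliceY_sum {α : Type*} (y : Fin n) (k : ℕ) (s : Finset α)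
    (f : α → MvPolynomial (Fin n) K) :
    sliceY y k (∑ i ∈ s, f i) = ∑ i ∈ s, sliceY y k (f i) := by
  ext e
  simp only [coeff_sliceY, coeff_sum]
  split <;> simp [coeff_sliceY, *]

lemma sliceY_add (y : Fin n) (k : ℕ) (f g : MvPolynomial (Fin n) K) :
    sliceY y k (f + g) = sliceY y k f + sliceY y k g := by
  ext e
  simp only [coeff_sliceY, coeff_add]
  split <;> simp

lemma mem_support_sliceY {y : Fin n} {k : ℕ} {f : MvPolynomial (Fin n) K} {e : Fin n →₀ ℕ}
    (he : e ∈ (sliceY y k f).support) : e y = k := by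
  by_contra h
  exact (mem_support_iff.mp he) (by rw [coeff_sliceY, if_neg h])

lemma sliceY_eq_zero_of_lt {y : Fin n} {k : ℕ} {f : MvPolynomial (Fin n) K}
    (h : degreeOf y f < k) : sliceY y k f = 0 := by
  ext e
  rw [coeff_sliceY, coeff_zero]
  split_ifs with h1
  · by_contra hc
    have := (degreeOf_lt_iff (lt_of_le_of_lt (Nat.zero_le _) h)).mp h e (mem_support_iff.mpr hc)
    omega
  · rfl

lemma sum_sliceY (y : Fin n) (f : MvPolynomial (Fin n) K) :
    ∑ k ∈ Finset.range (degreeOf y f + 1), sliceY y k f = f := by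
  ext e
  rw [coeff_sum]
  simp only [coeff_sliceY]
  rw [Finset.sum_ite_eq (Finset.range (degreeOf y f + 1)) (e y) (fun _ => f.coeff e)]
  split_ifs with h
  · rfl
  · symm
    by_contra hc
    have := degreeOf_le_iff.mp (le_refl (degreeOf y f)) e (mem_support_iff.mpr hc)
    simp only [Finset.mem_range] at h
    omega

lemma sliceY_monomial_mul (y : Fin n) (μ : Fin n →₀ ℕ) (c : K) (k : ℕ)
    (p : MvPolynomial (Fin n) K) :
    sliceY y (μ y + k) (monomial μ c * p) = monomial μ c * sliceY y k p := by
  ext e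
  rw [coeff_sliceY, coeff_monomial_mul', coeff_monomial_mul']
  split_ifs with h1 h2 h2
  · rw [coeff_sliceY]
    have hle : μ y ≤ e y := h2 y
    have : (e - μ) y = e y - μ y := Finsupp.tsub_apply e μ y
    rw [if_pos (by omega)]
  · rfl
  · have hle : μ y ≤ e y := h2 y
    have he : (e - μ) y = e y - μ y := Finsupp.tsub_apply e μ y
    rw [coeff_sliceY, if_neg (by omega), mul_zero]
  · rfl

lemma leadExp_mem_support {m : MonomialOrder (Fin n)} {f : MvPolynomial (Fin n) K}
    (hf : f ≠ 0) : leadExp m f ∈ f.support := by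
  obtain ⟨c, hc, hsup⟩ := Finset.exists_mem_eq_sup f.support
    (MvPolynomial.support_nonempty.mpr hf) (fun c => m.toSyn c)
  rw [leadExp, hsup, AddEquiv.symm_apply_apply]
  exact hc

lemma le_leadExp {m : MonomialOrder (Fin n)} {f : MvPolynomial (Fin n) K} {e : Fin n →₀ ℕ}
    (he : e ∈ f.support) : m.toSyn e ≤ m.toSyn (leadExp m f) := by
  rw [leadExp, AddEquiv.apply_symm_apply]
  exact Finset.le_sup he

lemma coeff_inY (y : Fin n) (f : MvPolynomial (Fin n) K) (e : Fin n →₀ ℕ) :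
    (inY y f).coeff e = if e y = degreeOf y f then f.coeff e else 0 :=
  coeff_sliceY y (degreeOf y f) f e

lemma inY_ne_zero {y : Fin n} {f : MvPolynomial (Fin n) K} (hf : f ≠ 0) : inY y f ≠ 0 := by
  obtain ⟨c, hc, hsup⟩ := Finset.exists_mem_eq_sup f.support
    (MvPolynomial.support_nonempty.mpr hf) (fun c => c y)
  intro h
  have : (inY y f).coeff c = f.coeff c := by
    rw [coeff_inY, if_pos (by rw [degreeOf_eq_sup, hsup])]
  rw [h, coeff_zero] at this
  exact (mem_support_iff.mp hc) this.symm

lemma apply_y_leadExp {m : MonomialOrder (Fin n)} {y : Fin n}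
    (hcomp : IsYCompatible (K := K) m y) {f : MvPolynomial (Fin n) K} (hf : f ≠ 0) :
    (leadExp m f) y = degreeOf y f := by
  have h := (hcomp f hf).1
  have h2 : leadExp m (inY y f) ∈ (inY y f).support := leadExp_mem_support (inY_ne_zero hf)
  have h3 := mem_support_iff.mp h2
  rw [coeff_inY] at h3
  rw [h]
  by_contra hc
  rw [if_neg hc] at h3
  exact h3 rfl

lemma mem_support_mul_X_pow {y : Fin n} {p : MvPolynomial (Fin n) K} {k : ℕ}
    (hp : degreeOf y p = 0) {e : Fin n →₀ ℕ} (he : e ∈ (p * X y ^ k).support) : e y = k := by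
  have h := mem_support_iff.mp he
  rw [X_pow_eq_monomial, coeff_mul_monomial'] at h
  split_ifs at h with h1
  · have h2 : (e - Finsupp.single y k) y ≤ 0 := by
      rw [← hp]
      exact degreeOf_le_iff.mp (le_refl _) _ (mem_support_iff.mpr (by
        intro hz; rw [hz, zero_mul] at h; exact h rfl))
    have h3 : k ≤ e y := by simpa using Finsupp.single_le_iff.mp h1
    have h4 : (e - Finsupp.single y k) y = e y - k := by
      rw [Finsupp.tsub_apply, Finsupp.single_eq_same]
    omega
  · exact absurd rfl h

lemma key_lemma {y : Fin n} {m : MonomialOrder (Fin n)}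
    (hcomp : IsYCompatible (K := K) m y)
    {τ : ℕ} {g q : Fin τ → MvPolynomial (Fin n) K} {d : Fin τ → ℕ}
    (hin : ∀ i, inY y (g i) = q i * X y ^ d i)
    (hqy : ∀ i, degreeOf y (q i) = 0)
    {I : Ideal (MvPolynomial (Fin n) K)}
    (hGB : IsGroebnerBasis m I (Set.range g)) :
    ∀ (s : m.syn) (f : MvPolynomial (Fin n) K), m.toSyn (leadExp m f) = s →
      f ∈ I → f ≠ 0 →
      inY y f ∈ Ideal.span (Set.range fun i => q i * X y ^ d i) := by
  set J := Ideal.span (Set.range fun i => q i * X y ^ d i) with hJ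
  intro s
  induction s using WellFoundedLT.induction with
  | _ s ih =>
  intro f hs hfI hf0
  obtain ⟨b, hbG, hb0, hble⟩ := hGB.2 f hfI hf0
  obtain ⟨i, rfl⟩ := Set.mem_range.mp hbG
  -- notation
  set F := leadExp m f with hF
  set B := leadExp m (g i) with hB
  have hμBF : F - B + B = F := tsub_add_cancel_of_le hble
  set μ := F - B with hμ
  set c := f.coeff F / (g i).coeff B with hc
  set p := (monomial μ c : MvPolynomial (Fin n) K) * g i with hp
  have hlcb : (g i).coeff B ≠ 0 := mem_support_iff.mp (leadExp_mem_support hb0)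
  have hlcf : f.coeff F ≠ 0 := mem_support_iff.mp (leadExp_mem_support hf0)
  -- coeff of p at F
  have hcoeffpF : p.coeff F = f.coeff F := by
    rw [hp, coeff_monomial_mul', if_pos (by rw [← hμBF]; exact le_self_add)]
    have : F - μ = B := by rw [hμ, tsub_tsub_cancel_of_le hble]
    rw [this, hc, div_mul_cancel₀ _ hlcb]
  -- support of p
  have hsuppp : ∀ e ∈ p.support, m.toSyn e ≤ m.toSyn F ∧ (e ≠ F → m.toSyn e < m.toSyn F) := by
    intro e he
    have hce := mem_support_iff.mp he
    rw [hp, coeff_monomial_mul'] at hce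
    split_ifs at hce with h1
    · have h2 : e - μ ∈ (g i).support := mem_support_iff.mpr (by
        intro hz; rw [hz, mul_zero] at hce; exact hce rfl)
      have h3 : m.toSyn (e - μ) ≤ m.toSyn B := le_leadExp h2
      have h4 : μ + (e - μ) = e := add_tsub_cancel_of_le h1
      have h5 : m.toSyn e ≤ m.toSyn F := by
        calc m.toSyn e = m.toSyn μ + m.toSyn (e - μ) := by rw [← map_add, h4]
        _ ≤ m.toSyn μ + m.toSyn B := by exact add_le_add (le_refl _) h3
        _ = m.toSyn F := by rw [← map_add, hμBF]
      refine ⟨h5, fun hne => lt_of_le_of_ne h5 ?_⟩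
      intro heq
      exact hne (m.toSyn.injective heq)
    · exact absurd rfl hce
  -- f' = f - p
  have hf'I : f - p ∈ I := I.sub_mem hfI (I.mul_mem_left _ (hGB.1 (Set.mem_range_self i)))
  have hcoefff' : (f - p).coeff F = 0 := by rw [coeff_sub, hcoeffpF, sub_self]
  have hsuppf' : ∀ e ∈ (f - p).support, m.toSyn e < m.toSyn F := by
    intro e he
    have hne : e ≠ F := by rintro rfl; exact (mem_support_iff.mp he) hcoefff'
    have := MvPolynomial.support_sub (Fin n) f p he
    rcases Finset.mem_union.mp this with h | h
    · exact lt_of_le_of_ne (le_leadExp h) (fun hh => hne (m.toSyn.injective hh))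
    · exact (hsuppp e h).2 hne
  -- y-degrees
  set D := degreeOf y f with hD
  have hFy : F y = D := apply_y_leadExp hcomp hf0
  have hdegb : degreeOf y (g i) = d i := by
    have h1 : inY y (g i) ≠ 0 := inY_ne_zero hb0
    obtain ⟨e, he⟩ := MvPolynomial.support_nonempty.mpr h1
    have h2 : e y = degreeOf y (g i) := by
      have := mem_support_iff.mp he
      rw [coeff_inY] at this
      by_contra hcon
      rw [if_neg hcon] at this
      exact this rfl
    have h3 : e y = d i := by
      rw [hin i] at he
      exact mem_support_mul_X_pow (hqy i) he
    omega
  have hBy : B y = d i := by rw [apply_y_leadExp hcomp hb0, hdegb]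
  have hdiD : d i ≤ D := by
    have := hble y
    omega
  have hμy : μ y = D - d i := by
    rw [hμ, Finsupp.tsub_apply, hFy, hBy]
  -- slice decomposition
  have hsplit : sliceY y D f = sliceY y D p + sliceY y D (f - p) := by
    rw [← sliceY_add]; congr 1; ring
  have hpJ : sliceY y D p ∈ J := by
    have hDdecomp : D = μ y + d i := by omega
    rw [hp, hDdecomp, sliceY_monomial_mul]
    have h5 : inY y (g i) = sliceY y (d i) (g i) := by rw [inY_eq_sliceY, hdegb]
    rw [← h5, hin i]
    exact J.mul_mem_left _ (Ideal.subset_span (Set.mem_range_self i))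
  have hf'J : sliceY y D (f - p) ∈ J := by
    rcases eq_or_ne (f - p) 0 with h0 | h0
    · rw [h0, sliceY_zero]; exact J.zero_mem
    · have hdegp : degreeOf y p ≤ D := by
        calc degreeOf y p ≤ degreeOf y (monomial μ c) + degreeOf y (g i) :=
              degreeOf_mul_le y _ _
        _ ≤ μ y + d i := by
            refine add_le_add ?_ hdegb.le
            refine degreeOf_le_iff.mpr fun e he => ?_
            have := MvPolynomial.support_monomial_subset he
            rw [Finset.mem_singleton] at this
            rw [this]
        _ = D := by omega
      have hdegf' : degreeOf y (f - p) ≤ D := by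
        refine (degreeOf_sub_le y f p).trans ?_
        exact max_le (le_refl _) hdegp
      rcases lt_or_eq_of_le hdegf' with hlt | heq
      · rw [sliceY_eq_zero_of_lt hlt]; exact J.zero_mem
      · have hlt : m.toSyn (leadExp m (f - p)) < s := by
          rw [← hs]
          exact hsuppf' _ (leadExp_mem_support h0)
        have := ih _ hlt (f - p) rfl hf'I h0
        rwa [inY_eq_sliceY, heq] at this
  rw [inY_eq_sliceY, ← hD, hsplit]
  exact J.add_mem hpJ hf'J

lemma sliceY_mul_right (y : Fin n) (k : ℕ) (a p : MvPolynomial (Fin n) K)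
    (hp : degreeOf y p = 0) : sliceY y k (a * p) = sliceY y k a * p := by
  conv_lhs => rw [← support_sum_monomial_coeff p, Finset.mul_sum, sliceY_sum]
  conv_rhs => rw [← support_sum_monomial_coeff p, Finset.mul_sum]
  refine Finset.sum_congr rfl fun μ hμ => ?_
  have hμy : μ y = 0 := Nat.le_zero.mp (degreeOf_le_iff.mp hp.le μ hμ)
  rw [mul_comm a ((monomial μ) (coeff μ p)), mul_comm (sliceY y k a) _]
  have h := sliceY_monomial_mul y μ (coeff μ p) k a
  rwa [hμy, zero_add] at h

lemma X_dvd_of_support (y : Fin n) (p : MvPolynomial (Fin n) K)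
    (h : ∀ e ∈ p.support, 1 ≤ e y) : X y ∣ p := by
  refine ⟨∑ e ∈ p.support, monomial (e - Finsupp.single y 1) (p.coeff e), ?_⟩
  have hX : (X y : MvPolynomial (Fin n) K) = monomial (Finsupp.single y 1) 1 := by
    rw [← X_pow_eq_monomial, pow_one]
  conv_lhs => rw [← support_sum_monomial_coeff p]
  rw [hX, Finset.mul_sum]
  refine Finset.sum_congr rfl fun e he => ?_
  rw [monomial_mul, one_mul, add_tsub_cancel_of_le (Finsupp.single_le_iff.mpr (h e he))]

lemma inY_zero (y : Fin n) : inY y (0 : MvPolynomial (Fin n) K) = 0 := by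
  rw [inY_eq_sliceY, sliceY_zero]


theorem stmt_11 (y : Fin n) (m : MonomialOrder (Fin n))
    (hcomp : IsYCompatible (K := K) m y)
    (τ : ℕ) (g q r : Fin τ → MvPolynomial (Fin n) K) (d : Fin τ → ℕ)
    (hd : ∀ i, d i ≤ 1)
    (hdecomp : ∀ i, g i = q i * X y ^ d i + r i)
    (hqy : ∀ i, degreeOf y (q i) = 0)
    (hry : ∀ i, d i = 1 → degreeOf y (r i) = 0)
    (hin : ∀ i, inY y (g i) = q i * X y ^ d i)
    (I : Ideal (MvPolynomial (Fin n) K)) (hI : I = Ideal.span (Set.range g))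
    (hGB : IsGroebnerBasis m I (Set.range g)) :
    Ideal.span (inY y '' (I : Set (MvPolynomial (Fin n) K))) =
      Ideal.span (Set.range q) ⊓
        (Ideal.span (q '' {i | d i = 0}) ⊔ Ideal.span {X y}) := by

  classical
  set C := Ideal.span (Set.range q) with hCdef
  set N := Ideal.span (q '' {i | d i = 0}) with hNdef
  set J := Ideal.span (Set.range fun i => q i * X y ^ d i) with hJdef
  have hqiJ : ∀ i, d i = 0 → q i ∈ J := by
    intro i h0
    have : q i * X y ^ d i ∈ J := Ideal.subset_span (Set.mem_range_self i)
    rwa [h0, pow_zero, mul_one] at this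
  have hJC : J ≤ C := by
    rw [hJdef, Ideal.span_le]
    rintro _ ⟨i, rfl⟩
    exact Ideal.mul_mem_right _ _ (Ideal.subset_span (Set.mem_range_self i))
  have hJNY : J ≤ N ⊔ Ideal.span {X y} := by
    rw [hJdef, Ideal.span_le]
    rintro _ ⟨i, rfl⟩
    dsimp only
    rcases Nat.le_one_iff_eq_zero_or_eq_one.mp (hd i) with h0 | h1
    · rw [h0, pow_zero, mul_one]
      exact Submodule.mem_sup_left (Ideal.subset_span ⟨i, h0, rfl⟩)
    · refine Submodule.mem_sup_right (Ideal.mem_span_singleton.mpr ?_)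
      rw [h1, pow_one]
      exact dvd_mul_left _ _
  have hJLHS : J ≤ Ideal.span (inY y '' (I : Set (MvPolynomial (Fin n) K))) := by
    rw [hJdef, Ideal.span_le]
    rintro _ ⟨i, rfl⟩
    dsimp only
    refine Ideal.subset_span ⟨g i, ?_, hin i⟩
    rw [hI]
    exact Ideal.subset_span (Set.mem_range_self i)
  have hLHSJ : Ideal.span (inY y '' (I : Set (MvPolynomial (Fin n) K))) ≤ J := by
    rw [Ideal.span_le]
    rintro _ ⟨f, hf, rfl⟩
    rcases eq_or_ne f 0 with rfl | h0
    · rw [inY_zero]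
      exact J.zero_mem
    · exact key_lemma hcomp hin hqy hGB _ f rfl hf h0
  have hXyC : ∀ a ∈ C, X y * a ∈ J := by
    intro a ha
    induction ha using Submodule.span_induction with
    | mem x hx =>
      obtain ⟨i, rfl⟩ := hx
      rcases Nat.le_one_iff_eq_zero_or_eq_one.mp (hd i) with h0 | h1
      · exact J.mul_mem_left _ (hqiJ i h0)
      · have h2 : q i * X y ^ d i ∈ J := Ideal.subset_span (Set.mem_range_self i)
        rw [h1, pow_one] at h2
        rwa [mul_comm]
    | zero => simp only [mul_zero]; exact J.zero_mem
    | add x z hx hz ihx ihz => rw [mul_add]; exact J.add_mem ihx ihz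
    | smul c x hx ihx => rw [smul_eq_mul, mul_left_comm]; exact J.mul_mem_left c ihx
  have hRHSJ : C ⊓ (N ⊔ Ideal.span {X y}) ≤ J := by
    intro h hh
    rw [Submodule.mem_inf] at hh
    obtain ⟨hhC, hhNY⟩ := hh
    rw [← sum_sliceY y h]
    apply Ideal.sum_mem
    intro k _
    rcases Nat.eq_zero_or_pos k with rfl | hk1
    · obtain ⟨u, hu, v, hv, rfl⟩ := Submodule.mem_sup.mp hhNY
      rw [sliceY_add]
      have hv0 : sliceY y 0 v = 0 := by
        obtain ⟨w, rfl⟩ := Ideal.mem_span_singleton.mp hv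
        ext e
        rw [coeff_sliceY, coeff_zero]
        split_ifs with h1
        · rw [show (X y : MvPolynomial (Fin n) K) = monomial (Finsupp.single y 1) 1 by
            rw [← X_pow_eq_monomial, pow_one], coeff_monomial_mul', if_neg]
          intro hle
          have := Finsupp.single_le_iff.mp hle
          omega
        · rfl
      rw [hv0, add_zero]
      obtain ⟨cc, hccsupp, hccsum⟩ := Submodule.mem_span_set.mp hu
      have hsum : cc.sum (fun mi r => r • mi) = ∑ pp ∈ cc.support, cc pp * pp := rfl
      rw [← hccsum, hsum, sliceY_sum]
      apply Ideal.sum_mem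
      intro pp hpp
      obtain ⟨i, hi0, rfl⟩ := hccsupp hpp
      rw [sliceY_mul_right _ _ _ _ (hqy i)]
      exact J.mul_mem_left _ (hqiJ i hi0)
    · obtain ⟨cc, hccsupp, hccsum⟩ := Submodule.mem_span_set.mp hhC
      have hsum : cc.sum (fun mi r => r • mi) = ∑ pp ∈ cc.support, cc pp * pp := rfl
      rw [← hccsum, hsum, sliceY_sum]
      apply Ideal.sum_mem
      intro pp hpp
      obtain ⟨i, rfl⟩ := hccsupp hpp
      rw [sliceY_mul_right _ _ _ _ (hqy i)]
      obtain ⟨w, hw⟩ := X_dvd_of_support y (sliceY y k (cc (q i)))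
        (fun e he => by rw [mem_support_sliceY he]; omega)
      rw [hw, mul_assoc]
      exact hXyC _ (Ideal.mul_mem_left _ _ (Ideal.subset_span (Set.mem_range_self i)))
  exact le_antisymm (hLHSJ.trans (le_inf hJC hJNY)) (hRHSJ.trans hJLHS)
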